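/- arXiv:1307.5339 — 2 statements merged into one kernel-verified Lean document; each statement's English description precedes it below -/
import Mathlib

section
/- Let p ≥ 1, let S be a p×p real symmetric positive semidefinite matrix, let λ > 0, and let Θ̂ be a graphical lasso solution for S with tuning parameter λ. If j ≠ j' are indices with |S_{j j'}| > λ, then j and j' lie in the same connected component of the estimated graph of Θ̂. -/
open Matrix BigOperators

/-- The graphical lasso objective: log det Θ − tr(SΘ) − λ ∑_{j ≠ j'} |Θ_{jj'}|. -/
noncomputable def glassoObj {n : Type*} [Fintype n] [DecidableEq n]
    (S : Matrix n n ℝ) (lam : ℝ) (Θ : Matrix n n ℝ) : ℝ :=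
  Real.log Θ.det - (S * Θ).trace -
    lam * ∑ j : n, ∑ j' : n, (if j ≠ j' then |Θ j j'| else 0)

/-- A graphical lasso solution: a symmetric positive definite matrix maximizing the
graphical lasso objective over all symmetric positive definite matrices. -/
def IsGlassoSolution {n : Type*} [Fintype n] [DecidableEq n]
    (S : Matrix n n ℝ) (lam : ℝ) (Θhat : Matrix n n ℝ) : Prop :=
  Θhat.IsSymm ∧ Θhat.PosDef ∧
    ∀ Θ : Matrix n n ℝ, Θ.IsSymm → Θ.PosDef →
      glassoObj S lam Θ ≤ glassoObj S lam Θhat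

/-- The estimated graph of Θ̂: edge between distinct j, j' iff Θ̂_{jj'} ≠ 0. -/
def estimatedGraph {n : Type*} (Θ : Matrix n n ℝ) : SimpleGraph n :=
  SimpleGraph.fromRel (fun j j' => Θ j j' ≠ 0)

/-! If `j` and `j'` lie in different components of the estimated graph, then `Θ̂` is block
diagonal along the component of `j`, hence so is `Θ̂⁻¹`, and `Θ̂ j j' = Θ̂⁻¹ j j' = 0`.
Perturbing the `(j, j')` and `(j', j)` entries of `Θ̂` by `t ≥ 0`, against the sign of
`S j j'`, keeps it positive definite for small `t` and increases the objective at rate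
`2 (|S j j'| - λ) > 0`, because in the direction `A` of the perturbation `log det` has
derivative `tr (Θ̂⁻¹ A) = ± 2 Θ̂⁻¹ j j' = 0`. In general this is the
stationarity condition `|Θ̂⁻¹ j j' - S j j'| ≤ λ` at a zero off-diagonal entry. -/

open Filter Topology

namespace Matrix

section

variable {n : Type*} [Fintype n]

theorem PosDef.eventually_add_smul {M A : Matrix n n ℝ} (hM : M.PosDef) (hA : A.IsSymm) :
    ∀ᶠ t : ℝ in 𝓝 0, (M + t • A).PosDef := by
  have hsphere : ∀ᶠ t : ℝ in 𝓝 0, ∀ u ∈ Metric.sphere (0 : n → ℝ) 1,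
      0 < u ⬝ᵥ (M + t • A) *ᵥ u := by
    refine (isCompact_sphere 0 1).eventually_forall_of_forall_eventually fun u hu => ?_
    have hcont : Continuous fun z : ℝ × (n → ℝ) => z.2 ⬝ᵥ (M + z.1 • A) *ᵥ z.2 := by
      fun_prop
    refine hcont.continuousAt.eventually (lt_mem_nhds ?_)
    simpa using hM.dotProduct_mulVec_pos (ne_zero_of_mem_sphere one_ne_zero ⟨u, hu⟩)
  filter_upwards [hsphere] with t ht
  refine PosDef.of_dotProduct_mulVec_pos ?_ fun x hx => ?_
  · exact isHermitian_iff_isSymm.2 ((isHermitian_iff_isSymm.1 hM.isHermitian).add (hA.smul t))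
  · have hx' : 0 < ‖x‖ := norm_pos_iff.2 hx
    have hu : ‖x‖⁻¹ • x ∈ Metric.sphere (0 : n → ℝ) 1 := by
      simp [norm_smul, hx'.ne']
    have hscale : x ⬝ᵥ (M + t • A) *ᵥ x
        = ‖x‖ ^ 2 * ((‖x‖⁻¹ • x) ⬝ᵥ (M + t • A) *ᵥ (‖x‖⁻¹ • x)) := by
      simp only [mulVec_smul, dotProduct_smul, smul_dotProduct, smul_eq_mul]
      field_simp
    simpa [hscale] using mul_pos (pow_pos hx' 2) (ht _ hu)

variable [DecidableEq n]

/-- For singular `M` this is the junk value `M⁻¹ = 0`. -/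
theorem inv_apply_eq_zero_of_not_rel {R : Type*} [CommRing R] {r : n → n → Prop}
    (hr : Equivalence r) {M : Matrix n n R} (hM : ∀ a b, ¬ r a b → M a b = 0) {a b : n}
    (hab : ¬ r a b) : M⁻¹ a b = 0 := by
  by_cases hdet : IsUnit M.det
  swap
  · simp [nonsing_inv_apply_not_isUnit _ hdet]
  classical
  let N : Matrix n n R := of fun x y => if r x y then M⁻¹ x y else 0
  have hterm : ∀ x y z, M x y * N y z = if r x z then M x y * M⁻¹ y z else 0 := by
    intro x y z
    by_cases hxy : r x y
    · have hyz : r y z ↔ r x z := ⟨hr.trans hxy, hr.trans (hr.symm hxy)⟩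
      simp only [N, of_apply, hyz, mul_ite, mul_zero]
    · simp [hM x y hxy]
  have hMN : M * N = 1 := by
    ext x z
    simp only [mul_apply, hterm]
    split_ifs with hxz
    · rw [← mul_apply, mul_nonsing_inv M hdet]
    · simp [one_apply_ne (fun h : x = z => hxz (h ▸ hr.refl x))]
  simpa [N, hab] using congrFun (congrFun (inv_eq_right_inv hMN) a) b

theorem trace_mul_single_add_single {R : Type*} [CommRing R] (M : Matrix n n R) (i k : n)
    (c : R) : (M * (single i k c + single k i c)).trace = c * (M k i + M i k) := by
  rw [mul_add, trace_add, trace_mul_comm, trace_single_mul, trace_mul_comm, trace_single_mul]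
  simp [mul_add]

variable {𝕜 : Type*} [NontriviallyNormedField 𝕜]

open Polynomial in
theorem hasDerivAt_det_one_add_smul (B : Matrix n n 𝕜) :
    HasDerivAt (fun t : 𝕜 => (1 + t • B).det) B.trace 0 := by
  have h := (det (1 + (X : 𝕜[X]) • B.map C)).hasDerivAt 0
  rw [derivative_det_one_add_X_smul] at h
  convert h using 2 with t
  rw [eval_det]
  congr 1
  ext a b
  simp [one_apply, mul_comm]

theorem hasDerivAt_det_add_smul {M : Matrix n n 𝕜} (hM : IsUnit M.det) (A : Matrix n n 𝕜) :
    HasDerivAt (fun t : 𝕜 => (M + t • A).det) (M.det * (M⁻¹ * A).trace) 0 := by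
  have hfactor : ∀ t : 𝕜, M + t • A = M * (1 + t • (M⁻¹ * A)) := fun t => by
    rw [mul_add, mul_one, Matrix.mul_smul, ← mul_assoc, mul_nonsing_inv M hM, one_mul]
  simp only [hfactor, det_mul]
  exact (hasDerivAt_det_one_add_smul _).const_mul _

theorem hasDerivAt_log_det_add_smul {M : Matrix n n ℝ} (hM : M.det ≠ 0) (A : Matrix n n ℝ) :
    HasDerivAt (fun t : ℝ => Real.log (M + t • A).det) (M⁻¹ * A).trace 0 := by
  simpa [hM] using (hasDerivAt_det_add_smul hM.isUnit A).log (by simpa using hM)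

end

end Matrix

theorem HasDerivAt.eventually_lt_right_of_pos {f : ℝ → ℝ} {f' x : ℝ} (hf : HasDerivAt f f' x)
    (hf' : 0 < f') : ∀ᶠ t in 𝓝[>] x, f x < f t := by
  have hslope := (hasDerivAt_iff_tendsto_slope.mp hf).mono_left (nhdsGT_le_nhdsNE x)
  filter_upwards [hslope.eventually (eventually_gt_nhds hf'), self_mem_nhdsWithin]
    with t hpos ht
  exact (slope_pos_iff ht).mp hpos

theorem apply_eq_zero_of_not_reachable {n : Type*} {Θ : Matrix n n ℝ} {a b : n}
    (h : ¬ (estimatedGraph Θ).Reachable a b) : Θ a b = 0 := by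
  by_contra hab
  refine h (SimpleGraph.Adj.reachable ?_)
  simp only [estimatedGraph, SimpleGraph.fromRel_adj]
  exact ⟨fun hab' => h (hab' ▸ SimpleGraph.Reachable.refl a), Or.inl hab⟩

section

variable {n : Type*} [Fintype n] [DecidableEq n]

theorem inv_apply_eq_zero_of_not_reachable {Θ : Matrix n n ℝ} {a b : n}
    (h : ¬ (estimatedGraph Θ).Reachable a b) : Θ⁻¹ a b = 0 :=
  inv_apply_eq_zero_of_not_rel (SimpleGraph.reachable_is_equivalence _)
    (fun _ _ => apply_eq_zero_of_not_reachable) h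

def offDiagL1 (Θ : Matrix n n ℝ) : ℝ :=
  ∑ j : n, ∑ j' : n, (if j ≠ j' then |Θ j j'| else 0)

theorem glassoObj_eq_offDiagL1 (S : Matrix n n ℝ) (lam : ℝ) (Θ : Matrix n n ℝ) :
    glassoObj S lam Θ = Real.log Θ.det - (S * Θ).trace - lam * offDiagL1 Θ := rfl

theorem offDiagL1_add_single_add_single {Θ : Matrix n n ℝ} {j j' : n} (hne : j ≠ j')
    (h : Θ j j' = 0) (h' : Θ j' j = 0) (c : ℝ) :
    offDiagL1 (Θ + (single j j' c + single j' j c)) = offDiagL1 Θ + 2 * |c| := by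
  have hentry : ∀ a b, (if a ≠ b then |(Θ + (single j j' c + single j' j c)) a b| else 0) =
      (if a ≠ b then |Θ a b| else 0) + (single j j' |c| a b + single j' j |c| a b) := by
    intro a b
    by_cases h1 : a = j ∧ b = j' <;> by_cases h2 : a = j' ∧ b = j <;>
      simp_all [single_apply, eq_comm]
  simp only [offDiagL1, hentry, Finset.sum_add_distrib]
  simp only [ne_eq, ite_not, single_apply, ite_and, Finset.sum_ite_irrel, Finset.sum_ite_eq,
    Finset.mem_univ, ↓reduceIte, Finset.sum_const_zero, add_right_inj]
  ring

theorem IsGlassoSolution.abs_inv_apply_sub_le {S : Matrix n n ℝ} {lam : ℝ} {Θ : Matrix n n ℝ}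
    (hΘ : IsGlassoSolution S lam Θ) (hS : S.IsSymm) {j j' : n} (hne : j ≠ j')
    (hzero : Θ j j' = 0) : |Θ⁻¹ j j' - S j j'| ≤ lam := by
  obtain ⟨hsymm, hpd, hopt⟩ := hΘ
  set g := Θ⁻¹ j j' - S j j' with hg
  obtain ⟨σ, hσ, hσg⟩ : ∃ σ : ℝ, |σ| = 1 ∧ σ * g = |g| := by
    rcases le_or_gt 0 g with hg | hg
    · exact ⟨1, abs_one, by rw [one_mul, abs_of_nonneg hg]⟩
    · exact ⟨-1, by simp, by rw [abs_of_neg hg]; ring⟩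
  by_contra! hlt
  set A := single j j' σ + single j' j σ
  have hA : A.IsSymm := by
    simp only [A, IsSymm, transpose_add, transpose_single, add_comm]
  let ψ : ℝ → ℝ := fun t => Real.log (Θ + t • A).det -
    ((S * Θ).trace + t * (S * A).trace + lam * (offDiagL1 Θ + 2 * t))
  have hψ_eq : ∀ t, 0 ≤ t → glassoObj S lam (Θ + t • A) = ψ t := by
    intro t ht
    have hsmul : t • A = single j j' (t * σ) + single j' j (t * σ) := by
      simp only [A, smul_add, smul_single, smul_eq_mul]
    rw [glassoObj_eq_offDiagL1, hsmul,
      offDiagL1_add_single_add_single hne hzero ((hsymm.apply j j').trans hzero), ← hsmul]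
    simp only [ψ, Matrix.mul_add, Matrix.mul_smul, trace_add, trace_smul, smul_eq_mul, abs_mul,
      hσ, abs_of_nonneg ht]
    ring
  have hψ : HasDerivAt ψ (2 * (|g| - lam)) 0 := by
    have h := (hasDerivAt_log_det_add_smul hpd.det_pos.ne' A).sub
      ((((hasDerivAt_id (0 : ℝ)).mul_const (S * A).trace).const_add (S * Θ).trace).add
        ((((hasDerivAt_id (0 : ℝ)).const_mul 2).const_add (offDiagL1 Θ)).const_mul lam))
    refine h.congr_deriv ?_
    rw [trace_mul_single_add_single, trace_mul_single_add_single, hsymm.inv.apply, hS.apply]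
    linear_combination 2 * hσg - 2 * σ * hg
  obtain ⟨t, hψt, hpdt, ht⟩ := ((hψ.eventually_lt_right_of_pos (by linarith)).and
    (((hpd.eventually_add_smul hA).filter_mono nhdsWithin_le_nhds).and self_mem_nhdsWithin)).exists
  have hle := hopt _ (hsymm.add (hA.smul t)) hpdt
  have h0 := hψ_eq 0 le_rfl
  rw [zero_smul, add_zero] at h0
  rw [hψ_eq t ht.le, h0] at hle
  exact hle.not_gt hψt

end

theorem glasso_reachable_of_large_entry_general
    {p : ℕ}
    (S : Matrix (Fin p) (Fin p) ℝ) (hSsymm : S.IsSymm)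
    (lam : ℝ)
    (Θhat : Matrix (Fin p) (Fin p) ℝ) (hΘhat : IsGlassoSolution S lam Θhat)
    (j j' : Fin p) (hne : j ≠ j') (hlarge : lam < |S j j'|) :
    (estimatedGraph Θhat).Reachable j j' := by
  by_contra hreach
  have hkkt := hΘhat.abs_inv_apply_sub_le hSsymm hne (apply_eq_zero_of_not_reachable hreach)
  rw [inv_apply_eq_zero_of_not_reachable hreach, zero_sub, abs_neg] at hkkt
  exact hkkt.not_gt hlarge

/-- if |S_{jj'}| > λ for distinct j, j', then j and j' lie in the same connected
component of the estimated graph of any graphical lasso solution. -/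
theorem glasso_reachable_of_large_entry
    {p : ℕ} (hp : 1 ≤ p)
    (S : Matrix (Fin p) (Fin p) ℝ) (hSsymm : S.IsSymm) (hSpsd : S.PosSemidef)
    (lam : ℝ) (hlam : 0 < lam)
    (Θhat : Matrix (Fin p) (Fin p) ℝ) (hΘhat : IsGlassoSolution S lam Θhat)
    (j j' : Fin p) (hne : j ≠ j') (hlarge : lam < |S j j'|) :
    (estimatedGraph Θhat).Reachable j j' :=
  glasso_reachable_of_large_entry_general S hSsymm lam Θhat hΘhat j j' hne hlarge
end

section
/- Let p ≥ 1, let S be a p×p real symmetric positive semidefinite matrix, let c : {1,…,p} → {1,…,K} be a partition of the indices, and let λ_1, …, λ_K ≥ 0. For each k, let Θ̂_k be a minimizer of −log det Θ_k + trace(S_k Θ_k) + λ_k Σ_{j ≠ j'} |(Θ_k)_{j j'}| over symmetric positive definite matrices Θ_k of size |c⁻¹(k)|, where S_k is the principal submatrix of S indexed by c⁻¹(k). Let Θ̂ be the p×p matrix that is block diagonal with respect to c and whose principal submatrix indexed by c⁻¹(k) equals Θ̂_k for each k. Then Θ̂ minimizes −log det Θ + trace(S Θ) + Σ_{k=1}^K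 λ_k Σ_{j ≠ j', c(j)=c(j')=k} |Θ_{j j'}| over all symmetric positive definite p×p matrices Θ that are block diagonal with respect to c. (This is the penalized log likelihood interpretation of the cluster graphical lasso: it solves the weighted problem with weight λ_k on within-cluster entries and infinite weight on between-cluster entries.) -/
/-!
On matrices that are block diagonal with respect to `c`, the cluster graphical lasso objective
is the sum over clusters of the per-block objectives: the determinant factors over the blocks,
`tr(SΘ)` only sees the diagonal blocks of `S`, and the penalty only involves within-cluster
entries. A block diagonal matrix is positive definite exactly when each of its blocks is, so
the feasible sets match as well, and minimizing every summand separately minimizes the sum.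
-/

open Matrix BigOperators

/-- Per-block penalized negative log likelihood:
−log det M + tr(S M) + λ ∑_{i ≠ i'} |M_{ii'}|. -/
noncomputable def blockObj {n : Type*} [Fintype n] [DecidableEq n]
    (S : Matrix n n ℝ) (lam : ℝ) (M : Matrix n n ℝ) : ℝ :=
  -Real.log M.det + (S * M).trace + lam * ∑ i : n, ∑ i' : n, (if i ≠ i' then |M i i'| else 0)

/-- The cluster graphical lasso objective with cluster-specific penalties:
−log det Θ + tr(SΘ) + ∑_k λ_k ∑_{j ≠ j', c(j)=c(j')=k} |Θ_{jj'}|. -/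
noncomputable def cglObj {p K : ℕ} (S : Matrix (Fin p) (Fin p) ℝ)
    (c : Fin p → Fin K) (lam : Fin K → ℝ) (Θ : Matrix (Fin p) (Fin p) ℝ) : ℝ :=
  -Real.log Θ.det + (S * Θ).trace
    + ∑ k : Fin K, lam k * ∑ j : Fin p, ∑ j' : Fin p,
        (if j ≠ j' ∧ c j = k ∧ c j' = k then |Θ j j'| else 0)

open Finset

section Fibers

variable {m α M : Type*} [Fintype m] [Fintype α] [DecidableEq α] [AddCommMonoid M]

theorem Fintype.sum_eq_sum_fiber_of_eq_zero (b : m → α) (a : α) (f : m → M)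
    (hf : ∀ i, b i ≠ a → f i = 0) : ∑ i, f i = ∑ i : {i // b i = a}, f i := by
  rw [← Fintype.sum_fiberwise b f, Fintype.sum_eq_single a]
  exact fun a' ha' => Finset.sum_eq_zero fun i _ => hf i (i.2.trans_ne ha')

theorem Fintype.sum_sum_eq_sum_blocks (b : m → α) (F : m → m → M)
    (hF : ∀ ⦃i j⦄, b i ≠ b j → F i j = 0) :
    ∑ i, ∑ j, F i j = ∑ a, ∑ i : {i // b i = a}, ∑ j : {j // b j = a}, F i j := by
  rw [← Fintype.sum_fiberwise b]
  refine Finset.sum_congr rfl fun a _ => Finset.sum_congr rfl fun i _ => ?_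
  exact Fintype.sum_eq_sum_fiber_of_eq_zero b a _ fun j hj => hF (i.2.trans_ne hj.symm)

theorem Fintype.sum_sum_ite_ne_and_fiber [DecidableEq m] (b : m → α) (a : α)
    (F : m → m → M) :
    ∑ i, ∑ j, (if i ≠ j ∧ b i = a ∧ b j = a then F i j else 0)
      = ∑ i : {i // b i = a}, ∑ j : {j // b j = a}, if i ≠ j then F i j else 0 := by
  rw [Fintype.sum_eq_sum_fiber_of_eq_zero b a _ fun i hi =>
    Finset.sum_eq_zero fun j _ => if_neg fun h => hi h.2.1]
  refine Finset.sum_congr rfl fun i _ => ?_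
  rw [Fintype.sum_eq_sum_fiber_of_eq_zero b a _ fun j hj => if_neg fun h => hj h.2.2]
  refine Finset.sum_congr rfl fun j _ => ?_
  simp only [i.2, j.2, Subtype.ext_iff, Ne, and_true]

end Fibers

namespace Matrix

variable {m α R : Type*}

def IsBlockDiagonal [Zero R] (M : Matrix m m R) (b : m → α) : Prop :=
  ∀ ⦃i j⦄, b i ≠ b j → M i j = 0

namespace IsBlockDiagonal

variable {M : Matrix m m R} {b : m → α}

theorem isHermitian [AddMonoid R] [StarAddMonoid R] (hM : M.IsBlockDiagonal b)
    (hblocks : ∀ a, (M.toSquareBlock b a).IsHermitian) : M.IsHermitian := by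
  ext i j
  by_cases h : b i = b j
  · exact (hblocks (b j)).apply ⟨i, h⟩ ⟨j, rfl⟩
  · simp [hM h, hM (Ne.symm h)]

variable [Fintype m] [Fintype α] [DecidableEq α]

theorem trace_mul [NonUnitalNonAssocSemiring R] (hM : M.IsBlockDiagonal b) (A : Matrix m m R) :
    (A * M).trace = ∑ a, (A.toSquareBlock b a * M.toSquareBlock b a).trace := by
  simp only [trace, diag, mul_apply]
  exact Fintype.sum_sum_eq_sum_blocks b _ fun i j h => by rw [hM h.symm, mul_zero]

theorem dotProduct_mulVec [NonUnitalNonAssocSemiring R] (hM : M.IsBlockDiagonal b)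
    (x y : m → R) :
    x ⬝ᵥ (M *ᵥ y) =
      ∑ a, (fun i : {i // b i = a} => x i) ⬝ᵥ (M.toSquareBlock b a *ᵥ fun i => y i) := by
  simp only [dotProduct, mulVec, mul_sum]
  exact Fintype.sum_sum_eq_sum_blocks b _ fun i j h => by rw [hM h, zero_mul, mul_zero]

theorem det [DecidableEq m] [CommRing R] [LinearOrder α] (hM : M.IsBlockDiagonal b) :
    M.det = ∏ a, (M.toSquareBlock b a).det :=
  BlockTriangular.det_fintype fun _ _ h => hM h.ne'

theorem posDef_iff [CommRing R] [PartialOrder R] [StarRing R] [IsOrderedAddMonoid R]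
    (hM : M.IsBlockDiagonal b) :
    M.PosDef ↔ ∀ a, (M.toSquareBlock b a).PosDef := by
  refine ⟨fun h a => h.submatrix Subtype.val_injective, fun h => ?_⟩
  refine .of_dotProduct_mulVec_pos (hM.isHermitian fun a => (h a).isHermitian) fun x hx => ?_
  obtain ⟨i, hi⟩ := Function.ne_iff.mp hx
  rw [hM.dotProduct_mulVec]
  refine sum_pos' (fun a _ => (h a).posSemidef.dotProduct_mulVec_nonneg _) ⟨b i, mem_univ _, ?_⟩
  exact (h (b i)).dotProduct_mulVec_pos fun h0 => hi (congrFun h0 ⟨i, rfl⟩)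

theorem log_det [DecidableEq m] [LinearOrder α] {M : Matrix m m ℝ}
    (hM : M.IsBlockDiagonal b) (hpos : M.PosDef) :
    Real.log M.det = ∑ a, Real.log (M.toSquareBlock b a).det := by
  rw [hM.det, Real.log_prod fun a _ => (hM.posDef_iff.1 hpos a).det_pos.ne']

end IsBlockDiagonal

end Matrix

theorem cglObj_eq_sum_blockObj {p K : ℕ} (S : Matrix (Fin p) (Fin p) ℝ) (c : Fin p → Fin K)
    (lam : Fin K → ℝ) {Θ : Matrix (Fin p) (Fin p) ℝ} (hΘ : Θ.IsBlockDiagonal c)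
    (hpos : Θ.PosDef) :
    cglObj S c lam Θ =
      ∑ k, blockObj (S.toSquareBlock c k) (lam k) (Θ.toSquareBlock c k) := by
  simp only [cglObj, blockObj, hΘ.log_det hpos, hΘ.trace_mul,
    Fintype.sum_sum_ite_ne_and_fiber, sum_add_distrib, sum_neg_distrib]
  rfl

theorem cgl_block_assembly_minimizes_general
    {p K : ℕ}
    (S : Matrix (Fin p) (Fin p) ℝ)
    (c : Fin p → Fin K)
    (lam : Fin K → ℝ)
    (Θhatk : (k : Fin K) → Matrix {j : Fin p // c j = k} {j : Fin p // c j = k} ℝ)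
    (hΘhatk : ∀ k : Fin K,
      (Θhatk k).IsSymm ∧ (Θhatk k).PosDef ∧
        ∀ M : Matrix {j : Fin p // c j = k} {j : Fin p // c j = k} ℝ,
          M.IsSymm → M.PosDef →
          blockObj (S.submatrix (Subtype.val : {j : Fin p // c j = k} → Fin p) Subtype.val)
              (lam k) (Θhatk k)
            ≤ blockObj (S.submatrix (Subtype.val : {j : Fin p // c j = k} → Fin p) Subtype.val)
              (lam k) M)
    (Θhat : Matrix (Fin p) (Fin p) ℝ)
    (hblock : ∀ j j' : Fin p, c j ≠ c j' → Θhat j j' = 0)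
    (hsub : ∀ (k : Fin K) (i i' : {j : Fin p // c j = k}), Θhat i.1 i'.1 = Θhatk k i i') :
    Θhat.IsSymm ∧ Θhat.PosDef ∧
      ∀ Θ : Matrix (Fin p) (Fin p) ℝ, Θ.IsSymm → Θ.PosDef →
        (∀ j j' : Fin p, c j ≠ c j' → Θ j j' = 0) →
        cglObj S c lam Θhat ≤ cglObj S c lam Θ := by
  have hΘhat : Θhat.IsBlockDiagonal c := hblock
  have hblocks (k : Fin K) : Θhat.toSquareBlock c k = Θhatk k := ext (hsub k)
  have hpos : Θhat.PosDef := hΘhat.posDef_iff.2 fun k => hblocks k ▸ (hΘhatk k).2.1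
  refine ⟨isHermitian_iff_isSymm.1 hpos.isHermitian, hpos, fun Θ hsymm hΘpos hΘ => ?_⟩
  rw [cglObj_eq_sum_blockObj S c lam hΘhat hpos, cglObj_eq_sum_blockObj S c lam hΘ hΘpos]
  gcongr with k
  rw [hblocks k]
  exact (hΘhatk k).2.2 _ (hsymm.submatrix _) ((IsBlockDiagonal.posDef_iff hΘ).1 hΘpos k)

/-- the block diagonal matrix assembled from per-cluster graphical lasso solutions
minimizes the cluster graphical lasso objective over all symmetric positive definite matrices
that are block diagonal with respect to the partition c. -/
theorem cgl_block_assembly_minimizes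
    {p K : ℕ} (hp : 1 ≤ p)
    (S : Matrix (Fin p) (Fin p) ℝ) (hSsymm : S.IsSymm) (hSpsd : S.PosSemidef)
    (c : Fin p → Fin K) (hc : Function.Surjective c)
    (lam : Fin K → ℝ) (hlam : ∀ k, 0 ≤ lam k)
    (Θhatk : (k : Fin K) → Matrix {j : Fin p // c j = k} {j : Fin p // c j = k} ℝ)
    (hΘhatk : ∀ k : Fin K,
      (Θhatk k).IsSymm ∧ (Θhatk k).PosDef ∧
        ∀ M : Matrix {j : Fin p // c j = k} {j : Fin p // c j = k} ℝ,
          M.IsSymm → M.PosDef →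
          blockObj (S.submatrix (Subtype.val : {j : Fin p // c j = k} → Fin p) Subtype.val)
              (lam k) (Θhatk k)
            ≤ blockObj (S.submatrix (Subtype.val : {j : Fin p // c j = k} → Fin p) Subtype.val)
              (lam k) M)
    (Θhat : Matrix (Fin p) (Fin p) ℝ)
    (hblock : ∀ j j' : Fin p, c j ≠ c j' → Θhat j j' = 0)
    (hsub : ∀ (k : Fin K) (i i' : {j : Fin p // c j = k}), Θhat i.1 i'.1 = Θhatk k i i') :
    Θhat.IsSymm ∧ Θhat.PosDef ∧
      ∀ Θ : Matrix (Fin p) (Fin p) ℝ, Θ.IsSymm → Θ.PosDef →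
        (∀ j j' : Fin p, c j ≠ c j' → Θ j j' = 0) →
        cglObj S c lam Θhat ≤ cglObj S c lam Θ :=
  cgl_block_assembly_minimizes_general S c lam Θhatk hΘhatk Θhat hblock hsub
end
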